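/- arXiv:2005.09543 — 2 statements merged into one kernel-verified Lean document; each statement's English description precedes it below -/
import Mathlib

section
/- Let f, g : ℕ → ℂ with f(1) ≠ 0, μ_f the convolution inverse of f, and Λ_{fg} = μ_f ⋆ g. For real parameters U ≥ 1, V ≥ 1, writing h_{≤U} for the truncation of h to arguments ≤ U and h_{>V} for the truncation to arguments > V, the identity Λ_{fg} = (Λ_{fg})_{≤U} − (Λ_{fg})_{≤U} ⋆ (μ_f)_{≤V} ⋆ f + (μ_f)_{≤V} ⋆ g + (Λ_{fg})_{>U} ⋆ (μ_f)_{>V} ⋆ f holds (classical Vaughan identity). -/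
open Finset

/-- Dirichlet convolution of two arithmetic functions. -/
noncomputable def dconv (f g : ℕ → ℂ) : ℕ → ℂ := fun n => ∑ d ∈ n.divisors, f d * g (n / d)

/-- The indicator function of `{1}`, the identity for Dirichlet convolution. -/
def ind : ℕ → ℂ := fun n => if n = 1 then 1 else 0

/-- Truncation of an arithmetic function to arguments `≤ U`. -/
noncomputable def truncLe (h : ℕ → ℂ) (U : ℝ) : ℕ → ℂ := fun n => if (n : ℝ) ≤ U then h n else 0

/-- Truncation of an arithmetic function to arguments `> V`. -/
noncomputable def truncGt (h : ℕ → ℂ) (V : ℝ) : ℕ → ℂ := fun n => if V < (n : ℝ) then h n else 0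

noncomputable def toAF (h : ℕ → ℂ) : ArithmeticFunction ℂ := ⟨fun n => if n = 0 then 0 else h n, if_pos rfl⟩

lemma toAF_apply (h : ℕ → ℂ) {n : ℕ} (hn : n ≠ 0) : toAF h n = h n := if_neg hn

lemma dconv_eq_mul (f g : ℕ → ℂ) (n : ℕ) : dconv f g n = (toAF f * toAF g) n := by
  rw [ArithmeticFunction.mul_apply, dconv, ← Nat.sum_divisorsAntidiagonal (fun d e => f d * g e)]
  refine Finset.sum_congr rfl fun p hp => ?_
  rw [Nat.mem_divisorsAntidiagonal] at hp
  have h1 : p.1 ≠ 0 := fun h => hp.2 (by rw [← hp.1, h, zero_mul])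
  have h2 : p.2 ≠ 0 := fun h => hp.2 (by rw [← hp.1, h, mul_zero])
  rw [toAF_apply _ h1, toAF_apply _ h2]

lemma toAF_dconv (f g : ℕ → ℂ) : toAF (dconv f g) = toAF f * toAF g := by
  ext n
  rcases eq_or_ne n 0 with rfl | hn
  · simp
  · rw [toAF_apply _ hn, dconv_eq_mul]

lemma toAF_trunc (h : ℕ → ℂ) (U : ℝ) : toAF (truncLe h U) + toAF (truncGt h U) = toAF h := by
  ext n
  rcases eq_or_ne n 0 with rfl | hn
  · simp
  · rw [ArithmeticFunction.add_apply, toAF_apply _ hn, toAF_apply _ hn, toAF_apply _ hn,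
      truncLe, truncGt]
    by_cases hle : (n : ℝ) ≤ U
    · rw [if_pos hle, if_neg (not_lt.2 hle), add_zero]
    · rw [if_neg hle, if_pos (not_le.1 hle), zero_add]

/-- Classical Vaughan identity for `Λ_{fg} = μf ⋆ g`:
`Λ_{fg} = (Λ_{fg})_{≤U} − (Λ_{fg})_{≤U} ⋆ (μf)_{≤V} ⋆ f + (μf)_{≤V} ⋆ g + (Λ_{fg})_{>U} ⋆ (μf)_{>V} ⋆ f`. -/
theorem stmt2 (f g μf : ℕ → ℂ) (hf : f 1 ≠ 0)
    (hμ : ∀ n, dconv μf f n = ind n)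
    (U V : ℝ) (hU : 1 ≤ U) (hV : 1 ≤ V) :
    ∀ n : ℕ, 1 ≤ n →
      dconv μf g n =
        truncLe (dconv μf g) U n
          - dconv (dconv (truncLe (dconv μf g) U) (truncLe μf V)) f n
          + dconv (truncLe μf V) g n
          + dconv (dconv (truncGt (dconv μf g) U) (truncGt μf V)) f n := by

  intro n hn
  have hn0 : n ≠ 0 := by omega
  set Λ := dconv μf g with hΛ
  set TU := toAF (truncLe Λ U)
  set TU' := toAF (truncGt Λ U)
  set MV := toAF (truncLe μf V)
  set MV' := toAF (truncGt μf V)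
  set M := toAF μf
  set F := toAF f
  set G := toAF g
  have h1 : TU + TU' = M * G := by rw [toAF_trunc, hΛ, toAF_dconv]
  have h2 : MV + MV' = M := toAF_trunc μf V
  have h3 : M * F = 1 := by
    rw [← toAF_dconv]
    ext m
    rcases eq_or_ne m 0 with rfl | hm
    · simp
    · rw [toAF_apply _ hm, hμ, ind, ArithmeticFunction.one_apply]
  have key : M * G + TU * MV * F = TU + MV * G + TU' * MV' * F := by
    have e1 : TU' = M * G - TU := by linear_combination h1
    have e2 : MV' = M - MV := by linear_combination h2
    rw [e1, e2]
    linear_combination (TU + MV * G - M * G) * h3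
  have hpt := congrArg (fun a : ArithmeticFunction ℂ => a n) key
  simp only [ArithmeticFunction.add_apply] at hpt
  have eA : truncLe Λ U n = TU n := (toAF_apply _ hn0).symm
  have eB : dconv (dconv (truncLe Λ U) (truncLe μf V)) f n = (TU * MV * F) n := by
    rw [dconv_eq_mul, toAF_dconv]
  have eC : dconv (truncLe μf V) g n = (MV * G) n := dconv_eq_mul _ _ n
  have eD : dconv (dconv (truncGt Λ U) (truncGt μf V)) f n = (TU' * MV' * F) n := by
    rw [dconv_eq_mul, toAF_dconv]
  have eL : Λ n = (M * G) n := dconv_eq_mul _ _ n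
  rw [eL, eA, eB, eC, eD]
  linear_combination hpt
end

section
/- Let D : ℕ → ℂ be an arithmetic function and α ≥ 0 with Σ_{n ≤ x} |D(n)|² ≪ x (log x)^α as x → ∞. Then for every ε > 0, Σ_{n ≤ x} |D(n)|/n ≪ (log x)^{α/2 + 1 + ε}. -/
/-!
By Cauchy–Schwarz, `Σ_{n ≤ x} |D(n)|² ≪ x (log x)^α` gives `Σ_{n ≤ x} |D(n)| ≪ x (log x)^{α/2}`.
Writing `S(x) = Σ_{n ≤ x} |D(n)|/n`, the terms with `x/2 < n ≤ x` contribute at most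
`(2/x) Σ_{n ≤ x} |D(n)| ≪ (log x)^{α/2}`, so `S(x) ≤ S(x/2) + O((log x)^{α/2})`. Halving `x`
about `log x / log 2` times yields `S(x) ≪ (log x)^{α/2 + 1}`.
-/

open Finset Real

theorem sum_Icc_floor_le_sqrt (a : ℕ → ℝ) {x : ℝ} (hx : 0 ≤ x) :
    ∑ n ∈ Icc 1 ⌊x⌋₊, a n ≤ √(x * ∑ n ∈ Icc 1 ⌊x⌋₊, a n ^ 2) := by
  refine (le_abs_self _).trans (abs_le_sqrt ?_)
  calc (∑ n ∈ Icc 1 ⌊x⌋₊, a n) ^ 2 ≤ #(Icc 1 ⌊x⌋₊) * ∑ n ∈ Icc 1 ⌊x⌋₊, a n ^ 2 :=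
        sq_sum_le_card_mul_sum_sq
    _ ≤ x * ∑ n ∈ Icc 1 ⌊x⌋₊, a n ^ 2 := by
        gcongr
        simpa using Nat.floor_le hx

theorem sum_Icc_floor_le_of_sum_sq_le {a : ℕ → ℝ} {C α : ℝ} (hC : 0 ≤ C)
    (h : ∀ x : ℝ, 2 ≤ x → ∑ n ∈ Icc 1 ⌊x⌋₊, a n ^ 2 ≤ C * x * log x ^ α) (x : ℝ) (hx : 2 ≤ x) :
    ∑ n ∈ Icc 1 ⌊x⌋₊, a n ≤ √C * x * log x ^ (α / 2) := by
  have hlog : 0 ≤ log x := log_nonneg (by linarith)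
  have hsq : (√C * x * log x ^ (α / 2)) ^ 2 = x * (C * x * log x ^ α) := by
    rw [mul_pow, mul_pow, sq_sqrt hC, ← rpow_natCast (log x ^ (α / 2)), ← rpow_mul hlog]
    ring_nf
  calc ∑ n ∈ Icc 1 ⌊x⌋₊, a n ≤ √(x * ∑ n ∈ Icc 1 ⌊x⌋₊, a n ^ 2) :=
        sum_Icc_floor_le_sqrt a (by linarith)
    _ ≤ √(x * (C * x * log x ^ α)) :=
        sqrt_le_sqrt (mul_le_mul_of_nonneg_left (h x hx) (by linarith))
    _ = √C * x * log x ^ (α / 2) := by rw [← hsq, sqrt_sq (by positivity)]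

theorem sum_Icc_floor_div_le_half_add {a : ℕ → ℝ} (ha : ∀ n, 0 ≤ a n) {x : ℝ} (hx : 0 < x) :
    ∑ n ∈ Icc 1 ⌊x⌋₊, a n / n ≤
      ∑ n ∈ Icc 1 ⌊x / 2⌋₊, a n / n + 2 / x * ∑ n ∈ Icc 1 ⌊x⌋₊, a n := by
  have hIcc (m : ℕ) : Icc 1 m = Ioc 0 m := Icc_add_one_left_eq_Ioc 0 m
  have hsplit : ∑ n ∈ Icc 1 ⌊x⌋₊, a n / n =
      ∑ n ∈ Icc 1 ⌊x / 2⌋₊, a n / n + ∑ n ∈ Ioc ⌊x / 2⌋₊ ⌊x⌋₊, a n / n := by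
    rw [hIcc, hIcc, sum_Ioc_consecutive _ (Nat.zero_le _) (Nat.floor_le_floor (by linarith))]
  have hterm (n : ℕ) (hn : n ∈ Ioc ⌊x / 2⌋₊ ⌊x⌋₊) : a n / n ≤ 2 / x * a n := by
    have hxn : x / 2 < n := (Nat.lt_floor_add_one _).trans_le (mod_cast (mem_Ioc.1 hn).1)
    calc a n / n ≤ a n / (x / 2) := div_le_div_of_nonneg_left (ha n) (by positivity) hxn.le
      _ = 2 / x * a n := by field_simp
  rw [hsplit, mul_sum]
  gcongr
  calc ∑ n ∈ Ioc ⌊x / 2⌋₊ ⌊x⌋₊, a n / n ≤ ∑ n ∈ Ioc ⌊x / 2⌋₊ ⌊x⌋₊, 2 / x * a n :=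
        sum_le_sum hterm
    _ ≤ ∑ n ∈ Icc 1 ⌊x⌋₊, 2 / x * a n :=
        sum_le_sum_of_subset_of_nonneg (hIcc _ ▸ Ioc_subset_Ioc_left (Nat.zero_le _))
          fun n _ _ => by have := ha n; positivity

theorem dyadic_induction {P : ℝ → Prop} (base : ∀ x, 2 ≤ x → x ≤ 4 → P x)
    (step : ∀ x, 4 < x → P (x / 2) → P x) (x : ℝ) (hx : 2 ≤ x) : P x := by
  suffices h : ∀ N : ℕ, ∀ x, 2 ≤ x → x ≤ 2 ^ (N + 2) → P x by
    obtain ⟨N, hN⟩ := pow_unbounded_of_one_lt x one_lt_two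
    exact h N x hx (hN.le.trans (pow_le_pow_right₀ one_le_two (by omega)))
  intro N
  induction N with
  | zero => intro x hx hx4; exact base x hx (by norm_num at hx4 ⊢; linarith)
  | succ N ih =>
    intro x hx hxN
    rcases le_or_gt x 4 with hx4 | hx4
    · exact base x hx hx4
    · exact step x hx4 (ih (x / 2) (by linarith) (by rw [pow_succ] at hxN; linarith))

theorem log_div_two_rpow_add_one_add_le {β : ℝ} (hβ : 0 ≤ β) {x : ℝ} (hx : 2 ≤ x) :
    log (x / 2) ^ (β + 1) + log 2 * log x ^ β ≤ log x ^ (β + 1) := by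
  have hlog : log (x / 2) = log x - log 2 := log_div (by positivity) two_ne_zero
  have h0 : 0 ≤ log (x / 2) := log_nonneg (by linarith)
  have hle : log (x / 2) ≤ log x := by linarith [log_pos one_lt_two]
  rw [rpow_add' h0 (by positivity), rpow_add' (h0.trans hle) (by positivity), rpow_one, rpow_one]
  calc log (x / 2) ^ β * log (x / 2) + log 2 * log x ^ β
      ≤ log x ^ β * log (x / 2) + log 2 * log x ^ β := by gcongr
    _ = log x ^ β * log x := by rw [hlog]; ring

theorem sum_Icc_floor_div_le_of_sum_le {a : ℕ → ℝ} (ha : ∀ n, 0 ≤ a n) {B β : ℝ} (hB : 0 ≤ B)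
    (hβ : 0 ≤ β) (h : ∀ x : ℝ, 2 ≤ x → ∑ n ∈ Icc 1 ⌊x⌋₊, a n ≤ B * x * log x ^ β) :
    ∀ x : ℝ, 2 ≤ x → ∑ n ∈ Icc 1 ⌊x⌋₊, a n / n ≤ 4 * B / log 2 * log x ^ (β + 1) := by
  -- `K log 2 = 4B` covers both the base case `x ≤ 4` and the increment `2B` of each halving.
  set K := 4 * B / log 2
  have hl2 : 0 < log 2 := log_pos one_lt_two
  have hK : K * log 2 = 4 * B := div_mul_cancel₀ _ hl2.ne'
  have hK0 : 0 ≤ K := by positivity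
  refine dyadic_induction (fun x hx hx4 => ?base) (fun x hx4 ih => ?step)
  case base =>
    have hpow := rpow_nonneg (log_nonneg (by linarith : (1 : ℝ) ≤ x)) β
    have hlog : log 2 ≤ log x := log_le_log two_pos hx
    calc ∑ n ∈ Icc 1 ⌊x⌋₊, a n / n ≤ ∑ n ∈ Icc 1 ⌊x⌋₊, a n :=
          sum_le_sum fun n hn => div_le_self (ha n) (mod_cast (mem_Icc.1 hn).1)
      _ ≤ B * x * log x ^ β := h x hx
      _ ≤ K * log 2 * log x ^ β := by rw [hK, mul_comm 4 B]; gcongr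
      _ ≤ K * log x ^ (β + 1) := by
          rw [rpow_add_one (hl2.trans_le hlog).ne', mul_comm (log x ^ β), ← mul_assoc]
          gcongr
  case step =>
    have hpow := rpow_nonneg (log_nonneg (by linarith : (1 : ℝ) ≤ x)) β
    calc ∑ n ∈ Icc 1 ⌊x⌋₊, a n / n
        ≤ ∑ n ∈ Icc 1 ⌊x / 2⌋₊, a n / n + 2 / x * ∑ n ∈ Icc 1 ⌊x⌋₊, a n :=
          sum_Icc_floor_div_le_half_add ha (by linarith)
      _ ≤ K * log (x / 2) ^ (β + 1) + 2 / x * (B * x * log x ^ β) := by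
          gcongr
          exact h x (by linarith)
      _ = K * log (x / 2) ^ (β + 1) + 2 * B * log x ^ β := by field_simp
      _ ≤ K * (log (x / 2) ^ (β + 1) + log 2 * log x ^ β) := by
          rw [mul_add, ← mul_assoc, hK]
          gcongr
          linarith
      _ ≤ K * log x ^ (β + 1) := by
          gcongr
          exact log_div_two_rpow_add_one_add_le hβ (by linarith)

theorem rpow_le_inv_rpow_mul_rpow_add {a y : ℝ} (ha : 0 < a) (hay : a ≤ y) (s : ℝ) {ε : ℝ}
    (hε : 0 ≤ ε) : y ^ s ≤ (a ^ ε)⁻¹ * y ^ (s + ε) := by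
  have hy : 0 < y := ha.trans_le hay
  rw [le_inv_mul_iff₀ (rpow_pos_of_pos ha ε), rpow_add hy, mul_comm]
  gcongr

/-- If `Σ_{n ≤ x} |D(n)|² ≪ x (log x)^α`, then for every `ε > 0`,
`Σ_{n ≤ x} |D(n)|/n ≪ (log x)^{α/2 + 1 + ε}`. -/
theorem stmt5 (D : ℕ → ℂ) (α : ℝ) (hα : 0 ≤ α)
    (hD : ∃ C : ℝ, 0 < C ∧ ∀ x : ℝ, 2 ≤ x →
      ∑ n ∈ Finset.Icc 1 ⌊x⌋₊, ‖D n‖ ^ 2 ≤ C * x * Real.log x ^ α) :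
    ∀ ε : ℝ, 0 < ε →
      ∃ C' : ℝ, 0 < C' ∧ ∀ x : ℝ, 2 ≤ x →
        ∑ n ∈ Finset.Icc 1 ⌊x⌋₊, ‖D n‖ / (n : ℝ)
          ≤ C' * Real.log x ^ (α / 2 + 1 + ε) := by
  obtain ⟨C, hC, hsq⟩ := hD
  intro ε hε
  have hl2 : 0 < log 2 := log_pos one_lt_two
  have hfirst := sum_Icc_floor_le_of_sum_sq_le hC.le hsq
  refine ⟨4 * √C / log 2 * (log 2 ^ ε)⁻¹, by positivity, fun x hx => ?_⟩
  calc ∑ n ∈ Icc 1 ⌊x⌋₊, ‖D n‖ / (n : ℝ)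
      ≤ 4 * √C / log 2 * log x ^ (α / 2 + 1) :=
        sum_Icc_floor_div_le_of_sum_le (fun n => norm_nonneg _) (sqrt_nonneg C) (by positivity)
          hfirst x hx
    _ ≤ 4 * √C / log 2 * ((log 2 ^ ε)⁻¹ * log x ^ (α / 2 + 1 + ε)) := by
        gcongr
        exact rpow_le_inv_rpow_mul_rpow_add hl2 (log_le_log two_pos hx) _ hε.le
    _ = 4 * √C / log 2 * (log 2 ^ ε)⁻¹ * log x ^ (α / 2 + 1 + ε) := by ring
end
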